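/- arXiv:1911.00954 — 5 statements merged into one kernel-verified Lean document; each statement's English description precedes it below -/
import Mathlib

section
/- Let X be a finite set, let (x_k)_{k=1,…,K} be a sequence of elements of X, and for each k let a_k : X → ℝ be a function taking nonnegative values and satisfying a_k(x_k) ≥ a_min for some fixed a_min > 0. Then the sum over k = 1,…,K of 1 / (Σ_{i=1}^{k} a_i(x_k)) is at most (|X| / a_min) · Σ_{k=1}^{K} 1/k; in particular it is at most (|X| / a_min) · (1 + log K). -/
/-- Lemma `onebyn`: for a sequence `x` in a finite set `X` and functions `a k : X → ℝ`
nonnegative with `a k (x k) ≥ a_min > 0`, the sum of inverse cumulative weights is bounded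
by `(|X|/a_min) · H_K ≤ (|X|/a_min) · (1 + log K)`. -/
theorem stmt_0 {X : Type*} [Fintype X] (K : ℕ) (x : ℕ → X) (a : ℕ → X → ℝ)
    (amin : ℝ) (hmin : 0 < amin)
    (hnn : ∀ k y, 0 ≤ a k y)
    (hlb : ∀ k, amin ≤ a k (x k)) :
    (∑ k ∈ Finset.Icc 1 K, 1 / (∑ i ∈ Finset.Icc 1 k, a i (x k)))
      ≤ ((Fintype.card X : ℝ) / amin) * ∑ k ∈ Finset.Icc 1 K, (1 : ℝ) / k
    ∧ (∑ k ∈ Finset.Icc 1 K, 1 / (∑ i ∈ Finset.Icc 1 k, a i (x k)))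
      ≤ ((Fintype.card X : ℝ) / amin) * (1 + Real.log K) := by
  classical
  set c : ℕ → ℕ := fun k => ((Finset.Icc 1 k).filter (fun i => x i = x k)).card with hc
  have hc1 : ∀ k, 1 ≤ k → 1 ≤ c k := by
    intro k hk
    refine Finset.card_pos.mpr ⟨k, ?_⟩
    simp [Finset.mem_filter, Finset.mem_Icc, hk]
  have hcK : ∀ k, c k ≤ k := by
    intro k
    calc c k ≤ (Finset.Icc 1 k).card := Finset.card_filter_le _ _
      _ = k := by simp
  -- per-term bound
  have hterm : ∀ k ∈ Finset.Icc 1 K,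
      1 / (∑ i ∈ Finset.Icc 1 k, a i (x k)) ≤ (1/amin) * (1 / (c k : ℝ)) := by
    intro k hk
    rw [Finset.mem_Icc] at hk
    have hcpos : (0:ℝ) < c k := by exact_mod_cast hc1 k hk.1
    have hsum : amin * c k ≤ ∑ i ∈ Finset.Icc 1 k, a i (x k) := by
      have : amin * c k = ∑ i ∈ (Finset.Icc 1 k).filter (fun i => x i = x k), amin := by
        rw [Finset.sum_const, nsmul_eq_mul, mul_comm]
      rw [this]
      refine le_trans (Finset.sum_le_sum ?_) (Finset.sum_le_sum_of_subset_of_nonneg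
        (Finset.filter_subset _ _) (fun i _ _ => hnn i (x k)))
      intro i hi
      rw [Finset.mem_filter] at hi
      rw [← hi.2]
      exact hlb i
    have hpos : (0:ℝ) < amin * c k := mul_pos hmin hcpos
    calc 1 / (∑ i ∈ Finset.Icc 1 k, a i (x k)) ≤ 1 / (amin * c k) :=
          one_div_le_one_div_of_le hpos hsum
      _ = (1/amin) * (1 / (c k : ℝ)) := by rw [one_div_mul_eq_div, div_div]; ring
  -- fiberwise bound
  have hfib : ∑ k ∈ Finset.Icc 1 K, (1 : ℝ) / (c k)
      ≤ (Fintype.card X : ℝ) * ∑ j ∈ Finset.Icc 1 K, (1 : ℝ) / j := by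
    have := Finset.sum_fiberwise (Finset.Icc 1 K) (fun k => x k) (fun k => (1:ℝ) / (c k))
    rw [← this]
    have hbound : ∀ y : X, ∑ k ∈ (Finset.Icc 1 K).filter (fun k => x k = y), (1:ℝ)/(c k)
        ≤ ∑ j ∈ Finset.Icc 1 K, (1 : ℝ) / j := by
      intro y
      set S := (Finset.Icc 1 K).filter (fun k => x k = y) with hS
      have hmono : ∀ k ∈ S, ∀ k' ∈ S, k < k' → c k < c k' := by
        intro k hk k' hk' hlt
        rw [hS, Finset.mem_filter, Finset.mem_Icc] at hk hk'
        refine Finset.card_lt_card ⟨?_, ?_⟩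
        · intro i hi
          rw [Finset.mem_filter, Finset.mem_Icc] at hi ⊢
          exact ⟨⟨hi.1.1, le_trans hi.1.2 hlt.le⟩, by rw [hi.2, hk.2, hk'.2]⟩
        · intro hsub
          have : k' ∈ (Finset.Icc 1 k).filter (fun i => x i = x k) := by
            apply hsub
            rw [Finset.mem_filter, Finset.mem_Icc]
            exact ⟨⟨hk'.1.1, le_refl _⟩, rfl⟩
          rw [Finset.mem_filter, Finset.mem_Icc] at this
          omega
      have hinj : Set.InjOn c S := by
        intro k hk k' hk' he
        by_contra hne
        rcases lt_or_gt_of_ne hne with h | h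
        · exact absurd he (ne_of_lt (hmono k hk k' hk' h))
        · exact absurd he.symm (ne_of_lt (hmono k' hk' k hk h))
      calc ∑ k ∈ S, (1:ℝ)/(c k) = ∑ j ∈ S.image c, (1:ℝ)/j := (Finset.sum_image (f := fun j : ℕ => (1:ℝ)/(j:ℝ)) (fun k hk k' hk' h => hinj hk hk' h)).symm
        _ ≤ ∑ j ∈ Finset.Icc 1 K, (1 : ℝ) / j := by
            refine Finset.sum_le_sum_of_subset_of_nonneg ?_ (fun j _ _ => by positivity)
            intro j hj
            rw [Finset.mem_image] at hj
            obtain ⟨k, hk, rfl⟩ := hj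
            rw [hS, Finset.mem_filter, Finset.mem_Icc] at hk
            rw [Finset.mem_Icc]
            exact ⟨hc1 k hk.1.1, le_trans (hcK k) hk.1.2⟩
    calc ∑ y : X, ∑ k ∈ (Finset.Icc 1 K).filter (fun k => x k = y), (1:ℝ)/(c k)
        ≤ ∑ y : X, ∑ j ∈ Finset.Icc 1 K, (1 : ℝ) / j := Finset.sum_le_sum (fun y _ => hbound y)
      _ = (Fintype.card X : ℝ) * ∑ j ∈ Finset.Icc 1 K, (1 : ℝ) / j := by
          rw [Finset.sum_const, nsmul_eq_mul, Finset.card_univ]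
  have key : (∑ k ∈ Finset.Icc 1 K, 1 / (∑ i ∈ Finset.Icc 1 k, a i (x k)))
      ≤ ((Fintype.card X : ℝ) / amin) * ∑ k ∈ Finset.Icc 1 K, (1 : ℝ) / k := by
    calc (∑ k ∈ Finset.Icc 1 K, 1 / (∑ i ∈ Finset.Icc 1 k, a i (x k)))
        ≤ ∑ k ∈ Finset.Icc 1 K, (1/amin) * (1 / (c k : ℝ)) := Finset.sum_le_sum hterm
      _ = (1/amin) * ∑ k ∈ Finset.Icc 1 K, (1 : ℝ) / (c k) := by rw [Finset.mul_sum]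
      _ ≤ (1/amin) * ((Fintype.card X : ℝ) * ∑ j ∈ Finset.Icc 1 K, (1 : ℝ) / j) := by
          apply mul_le_mul_of_nonneg_left hfib (by positivity)
      _ = ((Fintype.card X : ℝ) / amin) * ∑ k ∈ Finset.Icc 1 K, (1 : ℝ) / k := by ring
  refine ⟨key, key.trans ?_⟩
  have hH : ∑ k ∈ Finset.Icc 1 K, (1 : ℝ) / k ≤ 1 + Real.log K := by
    have h1 : ((harmonic K : ℚ) : ℝ) = ∑ k ∈ Finset.Icc 1 K, (1 : ℝ) / k := by
      rw [harmonic_eq_sum_Icc]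
      push_cast
      simp [one_div]
    rw [← h1]
    exact_mod_cast harmonic_le_one_add_log K
  exact mul_le_mul_of_nonneg_left hH (by positivity)
end

section
/- Let Y_1, …, Y_m be independent, identically distributed random variables on a probability space such that ℙ(Y_i = j) = (1/2)^j for every integer j ≥ 1 (so each Y_i is geometric with success probability 1/2 counting the number of trials up to and including the first success, and E Y_i = 2). Then for every real ε > 0, ℙ( Σ_{i=1}^{m} Y_i − 2m > ε ) ≤ exp( − ⌊ε⌋² / (2 (2m + ⌊ε⌋)) ). -/
/-!
By Chernoff's bound, for `0 ≤ t` with `eᵗ < 2`,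
`ℙ(∑ Yᵢ ≥ 2m + a) ≤ e^{-t(2m+a)} (eᵗ / (2 - eᵗ))ᵐ`, since each `Yᵢ - 1` is geometric.
Taking `eᵗ = 1 + u` with `u = a / (2m + a)`, the exponent becomes
`-(2m + a)/2 · ((1 + u) log (1 + u) + (1 - u) log (1 - u))`, and the inequality
`(1 + u) log (1 + u) + (1 - u) log (1 - u) ≥ u²`, read off the Taylor series, turns the bound into
`exp (-a² / (2 (2m + a)))`. Finally, `∑ Yᵢ - 2m > ε` forces `∑ Yᵢ ≥ 2m + ⌊ε⌋`.
-/

open MeasureTheory ProbabilityTheory Real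

theorem Real.sq_le_one_add_mul_log_one_add_add_one_sub_mul_log_one_sub {u : ℝ} (hu : |u| < 1) :
    u ^ 2 ≤ (1 + u) * log (1 + u) + (1 - u) * log (1 - u) := by
  have hu2 : |u ^ 2| < 1 := by rw [abs_pow, sq_lt_one_iff_abs_lt_one, abs_abs]; exact hu
  have h1 : 0 < 1 + u := by linarith [neg_abs_le u]
  have h2 : 0 < 1 - u := by linarith [le_abs_self u]
  have hsum : HasSum (fun k : ℕ => (u ^ 2) ^ (k + 1) / ((2 * k + 1) * (k + 1)))
      ((1 + u) * log (1 + u) + (1 - u) * log (1 - u)) := by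
    have hs := ((hasSum_log_sub_log_of_abs_lt_one hu).mul_left u).sub
      (hasSum_pow_div_log_of_abs_lt_one hu2)
    rw [show (1 : ℝ) - u ^ 2 = (1 + u) * (1 - u) by ring, log_mul h1.ne' h2.ne'] at hs
    have hterm : (fun k : ℕ => (u ^ 2) ^ (k + 1) / ((2 * k + 1) * (k + 1))) = fun k : ℕ =>
        u * (2 * (1 / (2 * k + 1)) * u ^ (2 * k + 1)) - (u ^ 2) ^ (k + 1) / (k + 1) := by
      funext k
      field_simp
      ring
    rwa [hterm, show (1 + u) * log (1 + u) + (1 - u) * log (1 - u) =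
      u * (log (1 + u) - log (1 - u)) - -(log (1 + u) + log (1 - u)) by ring]
  simpa using le_hasSum hsum 0 fun k _ => by positivity

theorem Real.exp_neg_log_mul_mul_pow_le {m : ℕ} (hm : 0 < m) {a : ℝ} (ha : 0 ≤ a) :
    exp (-log (1 + a / (2 * m + a)) * (2 * m + a)) *
        ((1 + a / (2 * m + a)) / (1 - a / (2 * m + a))) ^ m
      ≤ exp (-a ^ 2 / (2 * (2 * m + a))) := by
  set D : ℝ := 2 * m + a
  set u := a / D
  have hm' : (0 : ℝ) < m := Nat.cast_pos.mpr hm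
  have hD : 0 < D := by positivity
  have hu0 : 0 ≤ u := by positivity
  have hu1 : u < 1 := (div_lt_one hD).mpr (by linarith)
  have hmD : (m : ℝ) = D * (1 - u) / 2 := by
    simp only [u, D]; field_simp; ring
  have hpow : ((1 + u) / (1 - u)) ^ m = exp (m * (log (1 + u) - log (1 - u))) := by
    rw [exp_nat_mul, ← log_div (by linarith) (by linarith), exp_log (by bound)]
  have hentropy := sq_le_one_add_mul_log_one_add_add_one_sub_mul_log_one_sub
    (abs_lt.mpr ⟨by linarith, hu1⟩)
  rw [hpow, ← exp_add, exp_le_exp]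
  calc -log (1 + u) * D + m * (log (1 + u) - log (1 - u))
      = -(D / 2) * ((1 + u) * log (1 + u) + (1 - u) * log (1 - u)) := by
        rw [hmD]; ring
    _ ≤ -(D / 2) * u ^ 2 := mul_le_mul_of_nonpos_left hentropy (by linarith)
    _ = -a ^ 2 / (2 * D) := by
        simp only [u]; field_simp

theorem MeasureTheory.Measure.ext_of_singleton_of_ne {α : Type*} [MeasurableSpace α]
    [Countable α] [MeasurableSingletonClass α] {μ ν : Measure α} [IsProbabilityMeasure μ]
    [IsProbabilityMeasure ν] (a : α) (h : ∀ x ≠ a, μ {x} = ν {x}) : μ = ν := by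
  have hcompl : μ.restrict {a}ᶜ = ν.restrict {a}ᶜ := by
    refine Measure.ext_iff_singleton.mpr fun x => ?_
    rw [Measure.restrict_apply (measurableSet_singleton x),
      Measure.restrict_apply (measurableSet_singleton x)]
    by_cases hx : x = a
    · simp [hx]
    · rw [Set.inter_eq_left.mpr (Set.singleton_subset_iff.mpr hx), h x hx]
  have ha : μ {a}ᶜ = ν {a}ᶜ := by
    simpa using congrArg (fun ρ : Measure α => ρ Set.univ) hcompl
  refine Measure.ext_iff_singleton.mpr fun x => ?_
  by_cases hx : x = a
  · subst hx
    rw [← compl_compl ({x} : Set α), prob_compl_eq_one_sub (measurableSet_singleton x).compl,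
      prob_compl_eq_one_sub (measurableSet_singleton x).compl, ha]
  · exact h x hx

namespace ProbabilityTheory

variable {p : unitInterval}

theorem mgf_natCast_geometricMeasure (hp : p ≠ 0) {t : ℝ} (ht : (1 - p) * exp t < 1) :
    mgf (fun n : ℕ => (n : ℝ)) (geometricMeasure p) t = p / (1 - (1 - p) * exp t) := by
  have hq : 0 ≤ (1 - p : ℝ) * exp t := mul_nonneg (by linarith [p.2.2]) (exp_pos t).le
  rw [mgf, integral_geometricMeasure hp, div_eq_mul_inv, ← tsum_geometric_of_lt_one hq ht,
    ← tsum_mul_left]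
  congr 1 with n
  rw [smul_eq_mul, mul_pow, ← exp_nat_mul, mul_comm t]
  ring

theorem map_eq_map_succ_geometricMeasure {Ω : Type*} [MeasurableSpace Ω] {P : Measure Ω}
    [IsProbabilityMeasure P] {Z : Ω → ℕ} (hZ : Measurable Z)
    (hlaw : ∀ n : ℕ, P {ω | Z ω = n + 1} = ENNReal.ofReal ((1 - p) ^ n * p)) (hp : p ≠ 0) :
    P.map Z = (geometricMeasure p).map (· + 1) := by
  have : IsProbabilityMeasure (P.map Z) := Measure.isProbabilityMeasure_map hZ.aemeasurable
  have : IsProbabilityMeasure ((geometricMeasure p).map (· + 1)) :=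
    Measure.isProbabilityMeasure_map measurable_from_top.aemeasurable
  refine Measure.ext_of_singleton_of_ne 0 fun x hx => ?_
  obtain ⟨n, rfl⟩ := Nat.exists_eq_succ_of_ne_zero hx
  rw [Measure.map_apply hZ (measurableSet_singleton _),
    Measure.map_apply measurable_from_top (measurableSet_singleton _),
    show (· + 1) ⁻¹' {n + 1} = {n} by ext; simp, geometricMeasure_singleton hp]
  exact hlaw n

theorem mgf_natCast_of_map_eq_map_succ_geometricMeasure {Ω : Type*} [MeasurableSpace Ω]
    {P : Measure Ω} {Z : Ω → ℕ} (hZ : Measurable Z)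
    (hlaw : P.map Z = (geometricMeasure p).map (· + 1)) (hp : p ≠ 0) {t : ℝ}
    (ht : (1 - p) * exp t < 1) :
    mgf (fun ω => (Z ω : ℝ)) P t = p * exp t / (1 - (1 - p) * exp t) := by
  calc mgf (fun ω => (Z ω : ℝ)) P t = mgf (fun n : ℕ => (n : ℝ)) (P.map Z) t :=
        (mgf_map hZ.aemeasurable (by fun_prop)).symm
    _ = mgf (fun n : ℕ => (n : ℝ) + 1) (geometricMeasure p) t := by
        rw [hlaw, mgf_map measurable_from_top.aemeasurable (by fun_prop)]
        simp only [Function.comp_def, Nat.cast_add_one]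
    _ = p * exp t / (1 - (1 - p) * exp t) := by
        rw [mgf_add_const, mgf_natCast_geometricMeasure hp ht, mul_one]
        ring

theorem measureReal_le_sum_le_of_map_eq_map_succ_geometricMeasure {Ω ι : Type*}
    [MeasurableSpace Ω] {P : Measure Ω} [Fintype ι] {Y : ι → Ω → ℕ}
    (hmeas : ∀ i, Measurable (Y i)) (hindep : iIndepFun Y P)
    {p : unitInterval} (hlaw : ∀ i, P.map (Y i) = (geometricMeasure p).map (· + 1))
    (hp : p ≠ 0) {t : ℝ} (ht0 : 0 ≤ t) (ht : (1 - p) * exp t < 1) (a : ℝ) :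
    P.real {ω | a ≤ ∑ i, (Y i ω : ℝ)}
      ≤ exp (-t * a) * (p * exp t / (1 - (1 - p) * exp t)) ^ Fintype.card ι := by
  have := hindep.isProbabilityMeasure
  set X : ι → Ω → ℝ := fun i ω => Y i ω
  have hXmeas : ∀ i, Measurable (X i) := fun i => measurable_from_top.comp (hmeas i)
  have hXindep : iIndepFun X P := hindep.comp _ fun _ => measurable_from_top
  have hmgf : ∀ i, mgf (X i) P t = p * exp t / (1 - (1 - p) * exp t) := fun i =>
    mgf_natCast_of_map_eq_map_succ_geometricMeasure (hmeas i) (hlaw i) hp ht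
  have hint : ∀ i, Integrable (fun ω => exp (t * X i ω)) P := fun i => by
    rw [← mgf_pos_iff, hmgf i]
    have : (0 : ℝ) < p := unitInterval.pos_iff_ne_zero.mpr hp
    have : 0 < 1 - (1 - p) * exp t := by linarith
    positivity
  have hsum : ∀ ω, ∑ i, (Y i ω : ℝ) = (∑ i, X i) ω := fun ω => by simp [X]
  simp_rw [hsum]
  calc P.real {ω | a ≤ (∑ i, X i) ω}
      ≤ exp (-t * a) * mgf (∑ i, X i) P t :=
        measure_ge_le_exp_mul_mgf a ht0 (hXindep.integrable_exp_mul_sum hXmeas fun i _ => hint i)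
    _ = _ := by
        rw [hXindep.mgf_sum hXmeas, Finset.prod_congr rfl fun i _ => hmgf i, Finset.prod_const,
          Finset.card_univ]

theorem measureReal_two_mul_add_le_sum_le {Ω : Type*} [MeasurableSpace Ω] {P : Measure Ω}
    {m : ℕ} (hm : 0 < m) {Y : Fin m → Ω → ℕ} (hmeas : ∀ i, Measurable (Y i))
    (hindep : iIndepFun Y P)
    (hdist : ∀ i, ∀ j : ℕ, 1 ≤ j → P {ω | Y i ω = j} = ENNReal.ofReal ((1 / 2 : ℝ) ^ j))
    {a : ℝ} (ha : 0 ≤ a) :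
    P.real {ω | 2 * m + a ≤ ∑ i, (Y i ω : ℝ)} ≤ exp (-a ^ 2 / (2 * (2 * m + a))) := by
  have := hindep.isProbabilityMeasure
  set half : unitInterval := ⟨1 / 2, by norm_num, by norm_num⟩
  have hhalf : half ≠ 0 := fun h => by simpa [half] using congrArg Subtype.val h
  have hlaw : ∀ i, P.map (Y i) = (geometricMeasure half).map (· + 1) := fun i =>
    map_eq_map_succ_geometricMeasure (hmeas i) (fun n => by
      rw [hdist i (n + 1) (by omega)]; congr 1; simp only [half]; ring) hhalf
  set u := a / (2 * m + a)
  have hm' : (0 : ℝ) < m := Nat.cast_pos.mpr hm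
  have hu0 : 0 ≤ u := by positivity
  have hu1 : u < 1 := (div_lt_one (by positivity)).mpr (by linarith)
  have hexp : exp (log (1 + u)) = 1 + u := exp_log (by positivity)
  calc P.real {ω | 2 * m + a ≤ ∑ i, (Y i ω : ℝ)}
      ≤ exp (-log (1 + u) * (2 * m + a)) *
          (half * exp (log (1 + u)) / (1 - (1 - half) * exp (log (1 + u)))) ^
            Fintype.card (Fin m) :=
        measureReal_le_sum_le_of_map_eq_map_succ_geometricMeasure hmeas hindep hlaw hhalf
          (log_nonneg (by linarith)) (by rw [hexp]; simp [half]; linarith) _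
    _ = exp (-log (1 + u) * (2 * m + a)) * ((1 + u) / (1 - u)) ^ m := by
        rw [hexp, Fintype.card_fin]; congr 2; simp only [half]; field_simp; ring
    _ ≤ _ := exp_neg_log_mul_mul_pow_le hm ha

end ProbabilityTheory

/-- Lemma `geometric_bound`: Hoeffding-type tail bound for a sum of `m` i.i.d. geometric
random variables with success probability `1/2` (counting trials, so `ℙ(Y = j) = 2⁻ʲ`
for `j ≥ 1` and `E Y = 2`). -/
theorem stmt_1 {Ω : Type*} [MeasurableSpace Ω] (P : Measure Ω) [IsProbabilityMeasure P]
    (m : ℕ) (Y : Fin m → Ω → ℕ)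
    (hmeas : ∀ i, Measurable (Y i))
    (hindep : iIndepFun Y P)
    (hdist : ∀ i, ∀ j : ℕ, 1 ≤ j →
      P {ω | Y i ω = j} = ENNReal.ofReal ((1 / 2 : ℝ) ^ j)) :
    ∀ ε : ℝ, 0 < ε →
      P {ω | (∑ i, (Y i ω : ℝ)) - 2 * m > ε}
        ≤ ENNReal.ofReal
            (Real.exp (-(⌊ε⌋ : ℝ) ^ 2 / (2 * (2 * (m : ℝ) + (⌊ε⌋ : ℝ))))) := by
  intro ε hε
  rcases Nat.eq_zero_or_pos m with rfl | hm
  · simp [hε.not_gt]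
  have hfloor : (0 : ℝ) ≤ ⌊ε⌋ := mod_cast Int.floor_nonneg.mpr hε.le
  have hsub : {ω | (∑ i, (Y i ω : ℝ)) - 2 * m > ε} ⊆ {ω | 2 * m + ⌊ε⌋ ≤ ∑ i, (Y i ω : ℝ)} :=
    fun ω hω => by
      simp only [Set.mem_ofPred_eq] at hω ⊢
      linarith [Int.floor_le ε]
  refine (measure_mono hsub).trans ((ENNReal.le_ofReal_iff_toReal_le (measure_ne_top _ _)
    (exp_pos _).le).mpr ?_)
  exact measureReal_two_mul_add_le_sum_le hm hmeas hindep hdist hfloor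
end

section
/- Let X be a finite set, let K be a natural number, let C ≥ 0, and let w : ℕ × X → ℝ take nonnegative values. Then Σ_{k=0}^{K−1} Σ_{x ∈ X} w(k,x) · 1{ Σ_{j=0}^{k} w(j,x) < C } ≤ |X| · C, where 1{·} is the indicator of the event that the cumulative sum of w(·,x) up to and including index k is below the threshold C. -/
lemma aux_min_contrib (C : ℝ) (hC : 0 ≤ C) (v : ℕ → ℝ) (hv : ∀ k, 0 ≤ v k) (K : ℕ) :
    ∑ k ∈ Finset.range K, (if (∑ j ∈ Finset.range (k + 1), v j) < C then v k else 0) ≤ C := by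
  induction K with
  | zero => simpa using hC
  | succ K ih =>
    rw [Finset.sum_range_succ]
    by_cases h : (∑ j ∈ Finset.range (K + 1), v j) < C
    · rw [if_pos h]
      have hT : ∑ k ∈ Finset.range K,
          (if (∑ j ∈ Finset.range (k + 1), v j) < C then v k else 0)
          ≤ ∑ k ∈ Finset.range K, v k := by
        apply Finset.sum_le_sum
        intro k _
        split <;> simp [hv k]
      have : (∑ k ∈ Finset.range K, v k) + v K < C := by
        rw [← Finset.sum_range_succ]; exact h
      linarith
    · rw [if_neg h]; simpa using ih

/-- Lemma `Minimal Contribution`: the total weight of pairs whose cumulative weight up to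
and including index `k` is below the threshold `C` is at most `|X| · C`. -/
theorem stmt_6 {X : Type*} [Fintype X] (K : ℕ) (C : ℝ) (hC : 0 ≤ C)
    (w : ℕ → X → ℝ) (hw : ∀ k x, 0 ≤ w k x) :
    ∑ k ∈ Finset.range K, ∑ x : X,
        (if (∑ j ∈ Finset.range (k + 1), w j x) < C then w k x else 0)
      ≤ (Fintype.card X : ℝ) * C := by
  rw [Finset.sum_comm]
  calc ∑ x : X, ∑ k ∈ Finset.range K,
        (if (∑ j ∈ Finset.range (k + 1), w j x) < C then w k x else 0)
      ≤ ∑ _x : X, C := by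
        apply Finset.sum_le_sum
        intro x _
        exact aux_min_contrib C hC (fun k => w k x) (fun k => hw k x) K
    _ = (Fintype.card X : ℝ) * C := by simp [Finset.sum_const, nsmul_eq_mul]
end

section
/- Let X be a finite set, μ > 0, C ≥ 0, and K a natural number. Let x : ℕ → X be a sequence and w : ℕ × X → ℝ a function with w(k,y) ≥ 0 for all k, y and w(k, x(k)) ≥ μ for all k. Then the number of indices k < K such that Σ_{i=0}^{k−1} w(i, x(k)) ≤ C is at most |X| · (C/μ + 1). -/
/-- Counting argument bounding the number of non-good episodes: the number of indices
`k < K` whose cumulative weight at `x k` is at most `C` is at most `|X| · (C/μ + 1)`. -/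
theorem stmt_7 {X : Type*} [Fintype X] (μ C : ℝ) (hμ : 0 < μ) (hC : 0 ≤ C)
    (K : ℕ) (x : ℕ → X) (w : ℕ → X → ℝ)
    (hw : ∀ k y, 0 ≤ w k y) (hwx : ∀ k, μ ≤ w k (x k)) :
    (((Finset.range K).filter
        (fun k => (∑ i ∈ Finset.range k, w i (x k)) ≤ C)).card : ℝ)
      ≤ (Fintype.card X : ℝ) * (C / μ + 1) := by
  classical
  set B := (Finset.range K).filter
      (fun k => (∑ i ∈ Finset.range k, w i (x k)) ≤ C) with hB
  have hcard : B.card = ∑ y : X, (B.filter fun k => x k = y).card :=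
    Finset.card_eq_sum_card_fiberwise (fun k _ => Finset.mem_univ (x k))
  have hfiber : ∀ y : X, ((B.filter fun k => x k = y).card : ℝ) ≤ C / μ + 1 := by
    intro y
    set s := B.filter fun k => x k = y with hs
    rcases s.eq_empty_or_nonempty with h | h
    · simp [h]; positivity
    · set k := s.max' h with hk
      have hkmem : k ∈ s := s.max'_mem h
      have hky : x k = y := (Finset.mem_filter.mp hkmem).2
      have hkB : k ∈ B := (Finset.mem_filter.mp hkmem).1
      have hkC : (∑ i ∈ Finset.range k, w i (x k)) ≤ C :=
        (Finset.mem_filter.mp hkB).2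
      have hsub : s.erase k ⊆ Finset.range k := by
        intro j hj
        have hjk : j ≠ k := (Finset.mem_erase.mp hj).1
        have hjs : j ∈ s := (Finset.mem_erase.mp hj).2
        exact Finset.mem_range.mpr (lt_of_le_of_ne (s.le_max' j hjs) hjk)
      have h1 : μ * ((s.erase k).card : ℝ) ≤ ∑ j ∈ s.erase k, w j y := by
        rw [mul_comm]
        calc ((s.erase k).card : ℝ) * μ = ∑ _j ∈ s.erase k, μ := by
              rw [Finset.sum_const, nsmul_eq_mul]
          _ ≤ ∑ j ∈ s.erase k, w j y := by
              apply Finset.sum_le_sum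
              intro j hj
              have hjy : x j = y :=
                (Finset.mem_filter.mp (Finset.mem_erase.mp hj).2).2
              simpa [hjy] using hwx j
      have h2 : ∑ j ∈ s.erase k, w j y ≤ ∑ i ∈ Finset.range k, w i y :=
        Finset.sum_le_sum_of_subset_of_nonneg hsub (fun i _ _ => hw i y)
      have h3 : μ * ((s.erase k).card : ℝ) ≤ C := by
        refine le_trans (le_trans h1 h2) ?_
        rwa [hky] at hkC
      have hpos : 1 ≤ s.card := Finset.card_pos.mpr h
      have hcardE : ((s.erase k).card : ℝ) = (s.card : ℝ) - 1 := by
        rw [Finset.card_erase_of_mem hkmem]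
        push_cast [Nat.cast_sub hpos]
        ring
      have : (s.card : ℝ) - 1 ≤ C / μ := by
        rw [le_div_iff₀ hμ, mul_comm, ← hcardE]
        exact h3
      linarith
  calc (B.card : ℝ) = ∑ y : X, ((B.filter fun k => x k = y).card : ℝ) := by
        rw [hcard]; push_cast; ring
    _ ≤ ∑ _y : X, (C / μ + 1) := Finset.sum_le_sum (fun y _ => hfiber y)
    _ = (Fintype.card X : ℝ) * (C / μ + 1) := by
        rw [Finset.sum_const, nsmul_eq_mul]; rfl
end

section
/- Let S and A be nonempty finite sets, H a natural number, r : S × A → ℝ a reward function, and μ : S → ℝ nonnegative with Σ_{s'} μ(s') = 1. Define the optimal value functions V*_t : S → ℝ for t = H+1, H, …, 1 by V*_{H+1}(s) = 0 and V*_t(s) = max_{a∈A} ( r(s,a) + Σ_{s'} μ(s') V*_{t+1}(s') ). Let π : S → A be any policy satisfying r(s, π(s)) = max_{a∈A} r(s,a) for all s, and define its value functions V^π_t by V^π_{H+1}(s) = 0 and V^π_t(s) = r(s, π(s)) + Σ_{s'} μ(s') V^π_{t+1}(s'). Then V^π_t(s) = V*_t(s) for every t ∈ {1, …, H+1} and every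 s ∈ S. -/
/-- On the contextual-bandit MDP `M_C`, the greedy policy (maximizing the instantaneous
reward) is optimal: its value function equals the optimal value function at every
timestep and state. -/
theorem stmt_9 {S A : Type*} [Fintype S] [Fintype A] [Nonempty S] [Nonempty A]
    (H : ℕ) (r : S → A → ℝ)
    (μ : S → ℝ) (hμ0 : ∀ s, 0 ≤ μ s) (hμ1 : ∑ s, μ s = 1)
    (Vstar Vpi : ℕ → S → ℝ)
    (hVstarH : ∀ s, Vstar (H + 1) s = 0)
    (hVstar : ∀ t ∈ Finset.Icc 1 H, ∀ s,
      Vstar t s = ⨆ a, (r s a + ∑ s', μ s' * Vstar (t + 1) s'))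
    (π : S → A) (hπ : ∀ s, r s (π s) = ⨆ a, r s a)
    (hVpiH : ∀ s, Vpi (H + 1) s = 0)
    (hVpi : ∀ t ∈ Finset.Icc 1 H, ∀ s,
      Vpi t s = r s (π s) + ∑ s', μ s' * Vpi (t + 1) s') :
    ∀ t ∈ Finset.Icc 1 (H + 1), ∀ s, Vpi t s = Vstar t s := by
  have key : ∀ d t : ℕ, t + d = H + 1 → 1 ≤ t → ∀ s, Vpi t s = Vstar t s := by
    intro d
    induction d with
    | zero =>
      intro t ht _ s
      simp only [Nat.add_zero] at ht
      subst ht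
      rw [hVpiH, hVstarH]
    | succ n ih =>
      intro t ht ht1 s
      have htH : t ≤ H := by omega
      have htmem : t ∈ Finset.Icc 1 H := Finset.mem_Icc.mpr ⟨ht1, htH⟩
      have hnext : ∀ s', Vpi (t + 1) s' = Vstar (t + 1) s' := ih (t + 1) (by omega) (by omega)
      rw [hVpi t htmem s, hVstar t htmem s, hπ s]
      have hsum : ∑ s', μ s' * Vpi (t + 1) s' = ∑ s', μ s' * Vstar (t + 1) s' := by
        exact Finset.sum_congr rfl fun s' _ => by rw [hnext s']
      rw [hsum]
      exact ciSup_add (Set.Finite.bddAbove (Set.finite_range (r s))) _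
  intro t ht s
  rw [Finset.mem_Icc] at ht
  exact key (H + 1 - t) t (by omega) ht.1 s
end
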